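/- arXiv:2311.07243 — 2 statements merged into one kernel-verified Lean document; each statement's English description precedes it below -/
import Mathlib

section
/- (Davis–Kahan sin Θ bound) Let G, G° ∈ ℝ^{m×m} be symmetric, let Ē ∈ ℝ^{m×d} have orthonormal columns spanning the invariant subspace of G associated with a group of eigenvalues separated by a gap Δ > 0 from the rest of the spectrum of G°, and let Ē° be the corresponding orthonormal eigenvector matrix of G°. Then ‖Ē°(Ē°)' − ĒĒ'‖_op ≤ 2·‖(G − G°)·Ē‖_op/Δ ≤ 2·‖G − G°‖_op/Δ. -/
/-!
Put `X = E0cᵀ E`. The eigen-relations give the Sylvester equation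
`L0c X - X L = -E0cᵀ (G - G0) E`. Centred at `c = (a + b) / 2`, the spectrum of `L` lies within
`(b - a) / 2` of `c` while that of `L0c` stays at distance `≥ (b - a) / 2 + Δ`, so
`Δ ‖X‖ ≤ ‖(G - G0) E‖`.

For the projections, `E0 E0ᵀ - E Eᵀ = E0 E0ᵀ (1 - E Eᵀ) - (1 - E0 E0ᵀ) E Eᵀ`. With the square
matrix `M = E0ᵀ E`, the two terms have squared norms `‖1 - M Mᵀ‖` and `‖1 - Mᵀ M‖`, which agree
because `M Mᵀ` and `Mᵀ M` have the same characteristic polynomial; and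
`(1 - E0 E0ᵀ) E = E0c X` has norm at most `‖X‖`.
-/

open Matrix
open scoped Matrix.Norms.L2Operator MatrixOrder

section IsometricCFC

variable {A : Type*} [NormedRing A] [StarRing A] [NormedAlgebra ℝ A]
  [IsometricContinuousFunctionalCalculus ℝ A IsSelfAdjoint]

lemma IsSelfAdjoint.norm_le_of_forall_spectrum {a : A} (ha : IsSelfAdjoint a) {r : ℝ}
    (hr : 0 ≤ r) (h : ∀ x ∈ spectrum ℝ a, |x| ≤ r) : ‖a‖ ≤ r := by
  simpa only [cfc_id ℝ a] using norm_cfc_le (f := id) hr h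

lemma IsSelfAdjoint.norm_le_norm_of_spectrum_subset {a b : A} (ha : IsSelfAdjoint a)
    (hb : IsSelfAdjoint b) (h : spectrum ℝ a ⊆ spectrum ℝ b) : ‖a‖ ≤ ‖b‖ :=
  ha.norm_le_of_forall_spectrum (norm_nonneg b) fun _ hx ↦
    IsometricContinuousFunctionalCalculus.norm_spectrum_le b (h hx) hb

variable [PartialOrder A] [StarOrderedRing A] [NonnegSpectrumClass ℝ A]

lemma IsSelfAdjoint.norm_le_of_neg_le_of_le {a : A} (ha : IsSelfAdjoint a) {r : ℝ} (hr : 0 ≤ r)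
    (h₁ : -algebraMap ℝ A r ≤ a) (h₂ : a ≤ algebraMap ℝ A r) : ‖a‖ ≤ r := by
  rw [← map_neg, algebraMap_le_iff_le_spectrum] at h₁
  rw [le_algebraMap_iff_spectrum_le] at h₂
  exact ha.norm_le_of_forall_spectrum hr fun x hx ↦ abs_le.2 ⟨h₁ x hx, h₂ x hx⟩

lemma norm_le_norm_of_nonneg_of_le {a b : A} (ha : 0 ≤ a) (hab : a ≤ b) : ‖a‖ ≤ ‖b‖ := by
  have hb : IsSelfAdjoint b := .of_nonneg (ha.trans hab)
  have hb_le : b ≤ algebraMap ℝ A ‖b‖ := le_algebraMap_of_spectrum_le fun x hx ↦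
    (le_abs_self x).trans (IsometricContinuousFunctionalCalculus.norm_spectrum_le b hx hb)
  have h := (le_algebraMap_iff_spectrum_le (IsSelfAdjoint.of_nonneg ha)).1 (hab.trans hb_le)
  exact (IsSelfAdjoint.of_nonneg ha).norm_le_of_forall_spectrum (norm_nonneg b) fun x hx ↦
    abs_le.2 ⟨by linarith [spectrum_nonneg_of_nonneg ha hx, norm_nonneg b], h x hx⟩

end IsometricCFC

namespace Matrix

variable {l m n : Type*} [Fintype l] [Fintype m] [Fintype n] [DecidableEq m] [DecidableEq n]

lemma spectrum_mul_comm {K : Type*} [Field K] (A B : Matrix n n K) :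
    spectrum K (A * B) = spectrum K (B * A) := by
  ext x
  simp only [mem_spectrum_iff_isRoot_charpoly, charpoly_mul_comm]

lemma l2_opNorm_one_sub_mul_comm {A B : Matrix n n ℝ} (hAB : IsSelfAdjoint (1 - A * B))
    (hBA : IsSelfAdjoint (1 - B * A)) : ‖1 - A * B‖ = ‖1 - B * A‖ := by
  have h : spectrum ℝ (1 - A * B) = spectrum ℝ (1 - B * A) := by
    rw [← map_one (algebraMap ℝ _), ← spectrum.singleton_sub_eq, ← spectrum.singleton_sub_eq,
      spectrum_mul_comm]
  exact le_antisymm (hAB.norm_le_norm_of_spectrum_subset hBA h.le)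
    (hBA.norm_le_norm_of_spectrum_subset hAB h.ge)

lemma l2_opNorm_transpose (A : Matrix m n ℝ) : ‖Aᵀ‖ = ‖A‖ := by
  rw [← conjTranspose_eq_transpose_of_trivial, l2_opNorm_conjTranspose]

lemma l2_opNorm_transpose_mul_self (A : Matrix l n ℝ) : ‖Aᵀ * A‖ = ‖A‖ * ‖A‖ := by
  rw [← conjTranspose_eq_transpose_of_trivial, l2_opNorm_conjTranspose_mul_self]

lemma l2_opNorm_le_one_of_isStarProjection {E : Matrix m n ℝ}
    (hE : IsStarProjection (E * Eᵀ)) : ‖E‖ ≤ 1 := by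
  have h := l2_opNorm_transpose_mul_self Eᵀ
  rw [transpose_transpose, l2_opNorm_transpose] at h
  nlinarith [hE.norm_le, norm_nonneg E]

lemma isStarProjection_mul_transpose {E : Matrix l n ℝ} (hE : Eᵀ * E = 1) :
    IsStarProjection (E * Eᵀ) where
  isIdempotentElem := by
    rw [IsIdempotentElem, Matrix.mul_assoc, ← Matrix.mul_assoc Eᵀ, hE, Matrix.one_mul]
  isSelfAdjoint := by
    rw [IsSelfAdjoint, star_eq_conjTranspose, conjTranspose_eq_transpose_of_trivial,
      transpose_mul, transpose_transpose]

lemma l2_opNorm_le_one_of_transpose_mul_self_eq_one {E : Matrix m n ℝ} (hE : Eᵀ * E = 1) :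
    ‖E‖ ≤ 1 :=
  l2_opNorm_le_one_of_isStarProjection (isStarProjection_mul_transpose hE)

lemma l2_opNorm_mul_le_of_l2_opNorm_le_one {A : Matrix l m ℝ} (hA : ‖A‖ ≤ 1) (B : Matrix m n ℝ) :
    ‖A * B‖ ≤ ‖B‖ :=
  (l2_opNorm_mul A B).trans (mul_le_of_le_one_left (norm_nonneg B) hA)

lemma l2_opNorm_mul_le_of_l2_opNorm_le_one' (A : Matrix l m ℝ) {B : Matrix m n ℝ} (hB : ‖B‖ ≤ 1) :
    ‖A * B‖ ≤ ‖A‖ :=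
  (l2_opNorm_mul A B).trans (mul_le_of_le_one_right (norm_nonneg A) hB)

lemma transpose_mul_self_one_sub_mul_transpose_mul {E F : Matrix m n ℝ} (hE : Eᵀ * E = 1)
    (hF : Fᵀ * F = 1) :
    ((1 - F * Fᵀ) * E)ᵀ * ((1 - F * Fᵀ) * E) = 1 - (Fᵀ * E)ᵀ * (Fᵀ * E) := by
  have hQ : (1 - F * Fᵀ)ᵀ * (1 - F * Fᵀ) = 1 - F * Fᵀ := by
    have h := (isStarProjection_mul_transpose hF).one_sub
    rw [← conjTranspose_eq_transpose_of_trivial, ← star_eq_conjTranspose, h.isSelfAdjoint.star_eq,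
      h.isIdempotentElem.eq]
  rw [transpose_mul, Matrix.mul_assoc, ← Matrix.mul_assoc _ _ E, hQ, Matrix.sub_mul,
    Matrix.mul_sub, Matrix.one_mul, hE, transpose_mul, transpose_transpose, Matrix.mul_assoc,
    Matrix.mul_assoc]

lemma l2_opNorm_sq_one_sub_mul_transpose_mul {E F : Matrix m n ℝ} (hE : Eᵀ * E = 1)
    (hF : Fᵀ * F = 1) : ‖(1 - F * Fᵀ) * E‖ ^ 2 = ‖1 - (Fᵀ * E)ᵀ * (Fᵀ * E)‖ := by
  rw [sq, ← l2_opNorm_transpose_mul_self, transpose_mul_self_one_sub_mul_transpose_mul hE hF]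

lemma l2_opNorm_one_sub_mul_transpose_mul_comm {E F : Matrix m n ℝ} (hE : Eᵀ * E = 1)
    (hF : Fᵀ * F = 1) : ‖(1 - E * Eᵀ) * F‖ = ‖(1 - F * Fᵀ) * E‖ := by
  refine (pow_left_inj₀ (norm_nonneg _) (norm_nonneg _) two_ne_zero).1 ?_
  rw [l2_opNorm_sq_one_sub_mul_transpose_mul hF hE, l2_opNorm_sq_one_sub_mul_transpose_mul hE hF,
    ← transpose_transpose (Eᵀ * F), transpose_mul Eᵀ F, transpose_transpose, transpose_transpose]
  refine l2_opNorm_one_sub_mul_comm ?_ ?_ <;>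
    simp [IsSelfAdjoint, star_eq_conjTranspose, transpose_mul, Matrix.mul_assoc]

lemma l2_opNorm_mul_transpose_sub_mul_transpose_le {E F : Matrix m n ℝ} (hE : Eᵀ * E = 1)
    (hF : Fᵀ * F = 1) : ‖F * Fᵀ - E * Eᵀ‖ ≤ 2 * ‖(1 - F * Fᵀ) * E‖ := by
  have hsplit : F * Fᵀ - E * Eᵀ = ((1 - E * Eᵀ) * F * Fᵀ)ᵀ - (1 - F * Fᵀ) * E * Eᵀ := by
    simp only [transpose_mul, transpose_sub, transpose_transpose, Matrix.sub_mul,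
      Matrix.one_mul, Matrix.mul_assoc]
    abel
  have hEt : ‖Eᵀ‖ ≤ 1 :=
    (l2_opNorm_transpose E).trans_le (l2_opNorm_le_one_of_transpose_mul_self_eq_one hE)
  have hFt : ‖Fᵀ‖ ≤ 1 :=
    (l2_opNorm_transpose F).trans_le (l2_opNorm_le_one_of_transpose_mul_self_eq_one hF)
  calc ‖F * Fᵀ - E * Eᵀ‖
      ≤ ‖(1 - E * Eᵀ) * F * Fᵀ‖ + ‖(1 - F * Fᵀ) * E * Eᵀ‖ := by
        rw [hsplit, ← l2_opNorm_transpose ((1 - E * Eᵀ) * F * Fᵀ)]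
        exact norm_sub_le _ _
    _ ≤ ‖(1 - E * Eᵀ) * F‖ + ‖(1 - F * Fᵀ) * E‖ :=
        add_le_add (l2_opNorm_mul_le_of_l2_opNorm_le_one' _ hFt)
          (l2_opNorm_mul_le_of_l2_opNorm_le_one' _ hEt)
    _ = 2 * ‖(1 - F * Fᵀ) * E‖ := by
        rw [l2_opNorm_one_sub_mul_transpose_mul_comm hE hF, two_mul]

lemma mul_l2_opNorm_le_l2_opNorm_mul {T : Matrix l m ℝ} {ρ : ℝ} (hρ : 0 ≤ ρ)
    (hT : (Tᵀ * T - ρ ^ 2 • 1).PosSemidef) (X : Matrix m n ℝ) : ρ * ‖X‖ ≤ ‖T * X‖ := by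
  have hle : ρ ^ 2 • (Xᵀ * X) ≤ (T * X)ᵀ * (T * X) := by
    have h : (T * X)ᵀ * (T * X) - ρ ^ 2 • (Xᵀ * X) = Xᴴ * (Tᵀ * T - ρ ^ 2 • 1) * X := by
      simp only [conjTranspose_eq_transpose_of_trivial, transpose_mul, Matrix.mul_sub,
        Matrix.sub_mul, Matrix.mul_smul, Matrix.smul_mul, Matrix.mul_one, Matrix.mul_assoc]
    rw [Matrix.le_iff, h]
    exact hT.conjTranspose_mul_mul_same X
  have hnonneg : 0 ≤ ρ ^ 2 • (Xᵀ * X) := by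
    rw [Matrix.nonneg_iff_posSemidef, ← conjTranspose_eq_transpose_of_trivial]
    exact (posSemidef_conjTranspose_mul_self X).smul (sq_nonneg ρ)
  have h := norm_le_norm_of_nonneg_of_le hnonneg hle
  rw [norm_smul, l2_opNorm_transpose_mul_self, l2_opNorm_transpose_mul_self, Real.norm_eq_abs,
    abs_of_nonneg (sq_nonneg ρ)] at h
  exact (mul_self_le_mul_self_iff (by positivity) (norm_nonneg _)).2 (by linarith)

lemma mul_l2_opNorm_le_l2_opNorm_mul_sub_mul {A : Matrix m m ℝ} {B : Matrix n n ℝ} {c r δ : ℝ}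
    (hδ : 0 ≤ δ) (hB : ‖B - c • 1‖ ≤ r)
    (hA : ((A - c • 1)ᵀ * (A - c • 1) - (r + δ) ^ 2 • 1).PosSemidef) (X : Matrix m n ℝ) :
    δ * ‖X‖ ≤ ‖A * X - X * B‖ := by
  have hr : 0 ≤ r := (norm_nonneg _).trans hB
  have hshift : (A - c • 1) * X = X * (B - c • 1) + (A * X - X * B) := by
    simp only [Matrix.sub_mul, Matrix.mul_sub, Matrix.smul_mul, Matrix.mul_smul, Matrix.one_mul,
      Matrix.mul_one]
    abel
  have h := mul_l2_opNorm_le_l2_opNorm_mul (by linarith) hA X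
  rw [hshift] at h
  have hXB : ‖X * (B - c • 1)‖ ≤ ‖X‖ * r :=
    (l2_opNorm_mul _ _).trans (mul_le_mul_of_nonneg_left hB (norm_nonneg X))
  linarith [norm_add_le (X * (B - c • 1)) (A * X - X * B)]

lemma l2_opNorm_sub_midpoint_smul_one_le {L : Matrix n n ℝ} (hL : L.IsHermitian) {a b : ℝ}
    (hab : a ≤ b) (ha : (L - a • 1).PosSemidef) (hb : (b • 1 - L).PosSemidef) :
    ‖L - ((a + b) / 2) • 1‖ ≤ (b - a) / 2 := by
  have hsa : IsSelfAdjoint (L - ((a + b) / 2) • 1) := by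
    rw [← isHermitian_iff_isSelfAdjoint]
    exact hL.sub (isHermitian_one.smul (IsSelfAdjoint.all _))
  refine hsa.norm_le_of_neg_le_of_le (by linarith) ?_ ?_ <;>
    rw [Algebra.algebraMap_eq_smul_one, Matrix.le_iff]
  · rwa [show L - ((a + b) / 2) • 1 - -(((b - a) / 2) • 1) = L - a • (1 : Matrix n n ℝ) by
      module]
  · rwa [show ((b - a) / 2) • 1 - (L - ((a + b) / 2) • 1) = b • 1 - L by module]

lemma posSemidef_transpose_mul_self_sub_of_posSemidef_mul {T : Matrix n n ℝ} (hT : T.IsHermitian)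
    {a b Δ : ℝ} (h : ((T - (a - Δ) • 1) * (T - (b + Δ) • 1)).PosSemidef) :
    ((T - ((a + b) / 2) • 1)ᵀ * (T - ((a + b) / 2) • 1) - ((b - a) / 2 + Δ) ^ 2 • 1).PosSemidef := by
  convert h using 1
  rw [transpose_sub, transpose_smul, transpose_one, (isHermitian_iff_isSymm.1 hT).eq]
  simp only [Matrix.sub_mul, Matrix.mul_sub, Matrix.smul_mul, Matrix.mul_smul, Matrix.one_mul,
    Matrix.mul_one]
  module

end Matrix

theorem stmt_9_general (m d e : ℕ) (G G0 : Matrix (Fin m) (Fin m) ℝ)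
    (hG0 : G0.IsHermitian)
    (E : Matrix (Fin m) (Fin d) ℝ) (L : Matrix (Fin d) (Fin d) ℝ)
    (E0 : Matrix (Fin m) (Fin d) ℝ)
    (E0c : Matrix (Fin m) (Fin e) ℝ) (L0c : Matrix (Fin e) (Fin e) ℝ)
    (a b Δ : ℝ) (hΔ : 0 < Δ) (hab : a ≤ b)
    (hEorth : Eᵀ * E = 1) (hE0orth : E0ᵀ * E0 = 1)
    (hinv : G * E = E * L)
    (hinv0c : G0 * E0c = E0c * L0c)
    (hspan : E0 * E0ᵀ + E0c * E0cᵀ = 1)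
    (hLsym : L.IsHermitian) (hL0csym : L0c.IsHermitian)
    (hLa : (L - a • 1).PosSemidef) (hLb : (b • (1 : Matrix (Fin d) (Fin d) ℝ) - L).PosSemidef)
    (hgap : ((L0c - (a - Δ) • (1 : Matrix (Fin e) (Fin e) ℝ)) *
             (L0c - (b + Δ) • (1 : Matrix (Fin e) (Fin e) ℝ))).PosSemidef) :
    ‖E0 * E0ᵀ - E * Eᵀ‖ ≤ 2 * ‖(G - G0) * E‖ / Δ
    ∧ 2 * ‖(G - G0) * E‖ / Δ ≤ 2 * ‖G - G0‖ / Δ := by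
  have hE0c_proj : E0c * E0cᵀ = 1 - E0 * E0ᵀ := eq_sub_of_add_eq' hspan
  have hE0c : ‖E0c‖ ≤ 1 := l2_opNorm_le_one_of_isStarProjection <| by
    rw [hE0c_proj]; exact (isStarProjection_mul_transpose hE0orth).one_sub
  have hsylvester : L0c * (E0cᵀ * E) - E0cᵀ * E * L = -(E0cᵀ * ((G - G0) * E)) := by
    have hcomm : E0cᵀ * G0 = L0c * E0cᵀ := by
      simpa only [transpose_mul, (isHermitian_iff_isSymm.1 hG0).eq,
        (isHermitian_iff_isSymm.1 hL0csym).eq] using congrArg transpose hinv0c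
    rw [← Matrix.mul_assoc, ← hcomm, Matrix.mul_assoc, Matrix.mul_assoc, ← hinv, Matrix.sub_mul,
      Matrix.mul_sub]
    abel
  have hX : Δ * ‖E0cᵀ * E‖ ≤ ‖(G - G0) * E‖ := calc
    Δ * ‖E0cᵀ * E‖ ≤ ‖L0c * (E0cᵀ * E) - E0cᵀ * E * L‖ :=
      mul_l2_opNorm_le_l2_opNorm_mul_sub_mul hΔ.le
        (l2_opNorm_sub_midpoint_smul_one_le hLsym hab hLa hLb)
        (posSemidef_transpose_mul_self_sub_of_posSemidef_mul hL0csym hgap) _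
    _ ≤ ‖(G - G0) * E‖ := by
      rw [hsylvester, norm_neg]
      exact l2_opNorm_mul_le_of_l2_opNorm_le_one (by rwa [l2_opNorm_transpose]) _
  have hproj : ‖E0 * E0ᵀ - E * Eᵀ‖ ≤ 2 * ‖E0cᵀ * E‖ := calc
    ‖E0 * E0ᵀ - E * Eᵀ‖ ≤ 2 * ‖(1 - E0 * E0ᵀ) * E‖ :=
      l2_opNorm_mul_transpose_sub_mul_transpose_le hEorth hE0orth
    _ = 2 * ‖E0c * (E0cᵀ * E)‖ := by rw [← hE0c_proj, Matrix.mul_assoc]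
    _ ≤ 2 * ‖E0cᵀ * E‖ := by gcongr; exact l2_opNorm_mul_le_of_l2_opNorm_le_one hE0c _
  refine ⟨?_, ?_⟩
  · rw [le_div_iff₀ hΔ]
    nlinarith [hX, hproj]
  · gcongr
    exact l2_opNorm_mul_le_of_l2_opNorm_le_one' _
      (l2_opNorm_le_one_of_transpose_mul_self_eq_one hEorth)

/-- Davis–Kahan `sin Θ` bound: if `Ē` is an orthonormal block of eigenvectors of the
symmetric matrix `G` with eigenvalues in `[a,b]`, and `Ē°` is the orthonormal block of
eigenvectors of the symmetric matrix `G°` whose eigenvalues lie in `[a,b]`, the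
remaining eigenvalues of `G°` lying outside `[a−Δ, b+Δ]`, then
`‖Ē°Ē°' − ĒĒ'‖ ≤ 2‖(G−G°)Ē‖/Δ ≤ 2‖G−G°‖/Δ`. -/
theorem stmt_9 (m d e : ℕ) (G G0 : Matrix (Fin m) (Fin m) ℝ)
    (hG : G.IsHermitian) (hG0 : G0.IsHermitian)
    (E : Matrix (Fin m) (Fin d) ℝ) (L : Matrix (Fin d) (Fin d) ℝ)
    (E0 : Matrix (Fin m) (Fin d) ℝ) (L0 : Matrix (Fin d) (Fin d) ℝ)
    (E0c : Matrix (Fin m) (Fin e) ℝ) (L0c : Matrix (Fin e) (Fin e) ℝ)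
    (a b Δ : ℝ) (hΔ : 0 < Δ) (hab : a ≤ b)
    (hEorth : Eᵀ * E = 1) (hE0orth : E0ᵀ * E0 = 1)
    (hinv : G * E = E * L) (hinv0 : G0 * E0 = E0 * L0)
    (hinv0c : G0 * E0c = E0c * L0c)
    (hspan : E0 * E0ᵀ + E0c * E0cᵀ = 1)
    (hLsym : L.IsHermitian) (hL0csym : L0c.IsHermitian)
    (hLa : (L - a • 1).PosSemidef) (hLb : (b • (1 : Matrix (Fin d) (Fin d) ℝ) - L).PosSemidef)
    (hL0a : (L0 - a • 1).PosSemidef)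
    (hL0b : (b • (1 : Matrix (Fin d) (Fin d) ℝ) - L0).PosSemidef)
    (hgap : ((L0c - (a - Δ) • (1 : Matrix (Fin e) (Fin e) ℝ)) *
             (L0c - (b + Δ) • (1 : Matrix (Fin e) (Fin e) ℝ))).PosSemidef) :
    ‖E0 * E0ᵀ - E * Eᵀ‖ ≤ 2 * ‖(G - G0) * E‖ / Δ
    ∧ 2 * ‖(G - G0) * E‖ / Δ ≤ 2 * ‖G - G0‖ / Δ :=
  stmt_9_general m d e G G0 hG0 E L E0 E0c L0c a b Δ hΔ hab hEorth hE0orth hinv hinv0c hspan hLsym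
    hL0csym hLa hLb hgap
end

section
/- Let F̂ ∈ ℝ^{p×d} with (1/p)F̂'F̂ = I_d be the matrix of d leading scaled left singular vectors of X ∈ ℝ^{p×K}, and F ∈ ℝ^{p×d} a matrix with s_min((1/p)F'F) ≥ c_F > 0. Define R = (1/p)F'F̂. If the projection matrices satisfy ‖P_{F̂} − P_F‖_op ≤ ε < 1, then s_min(R·R') = s_min((1/p)F'P_{F̂}F) ≥ c_F·(1 − ε)² > 0; in particular R is invertible and s_max(R), s_min(R)^{−1} are bounded in terms of c_F, s_max((1/p)F'F), and ε. -/
/-!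
For `x : ℝᵈ` put `y = F x`. Since `P_F y = y`, the reverse triangle inequality and
`‖P_F̂ - P_F‖ ≤ ε` give `‖P_F̂ y‖ ≥ (1 - ε) ‖y‖`, and since `P_F̂` is an orthogonal projection,
`x' (F' P_F̂ F) x = ‖P_F̂ y‖²`. Hence `F' P_F̂ F ≥ (1 - ε)² F'F` in the Loewner order; together with
`(1/p) F'F ≥ c_F` this gives `R R' = (1/p) F' P_F̂ F ≥ c_F (1 - ε)² > 0`, so `R` is invertible.
-/

open Matrix
open scoped Matrix.Norms.L2Operator

open scoped ComplexOrder in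
lemma Matrix.PosSemidef.posDef_of_sub_smul_one {n 𝕜 : Type*} [Fintype n] [DecidableEq n]
    [RCLike 𝕜] {A : Matrix n n 𝕜} {c : ℝ} (hc : 0 < c) (h : (A - c • 1).PosSemidef) :
    A.PosDef := by
  simpa using PosDef.posSemidef_add h (PosDef.one.smul hc)

lemma Matrix.mul_nonsing_inv_transpose_mul_self_mul {m n R : Type*} [Fintype m] [Fintype n]
    [DecidableEq n] [CommRing R] {F : Matrix m n R} (h : IsUnit (Fᵀ * F).det) :
    F * (Fᵀ * F)⁻¹ * Fᵀ * F = F := by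
  rw [Matrix.mul_assoc _ Fᵀ, Matrix.mul_assoc, nonsing_inv_mul _ h, Matrix.mul_one]

lemma Matrix.isIdempotentElem_smul_mul_transpose {m n R : Type*} [Fintype m] [Fintype n]
    [DecidableEq n] [CommRing R] {A : Matrix m n R} {c : R} (h : c • (Aᵀ * A) = 1) :
    IsIdempotentElem (c • (A * Aᵀ)) := by
  calc c • (A * Aᵀ) * c • (A * Aᵀ) = c • (A * (c • (Aᵀ * A)) * Aᵀ) := by
        simp only [Matrix.smul_mul, Matrix.mul_smul, Matrix.mul_assoc]
    _ = c • (A * Aᵀ) := by rw [h, Matrix.mul_one]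

lemma Matrix.dotProduct_mulVec_of_transpose_eq_of_isIdempotentElem {m R : Type*} [Fintype m]
    [CommSemiring R] {P : Matrix m m R} (hPsymm : Pᵀ = P) (hPidem : IsIdempotentElem P)
    (y : m → R) : y ⬝ᵥ (P *ᵥ y) = (P *ᵥ y) ⬝ᵥ (P *ᵥ y) := by
  conv_lhs => rw [← hPidem.eq, ← mulVec_mulVec, dotProduct_mulVec, ← mulVec_transpose, hPsymm]

lemma dotProduct_self_eq_norm_sq {n : Type*} [Fintype n] (y : n → ℝ) :
    y ⬝ᵥ y = ‖WithLp.toLp 2 y‖ ^ 2 := by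
  rw [← real_inner_self_eq_norm_sq, EuclideanSpace.inner_toLp_toLp, star_trivial]

lemma Matrix.one_sub_mul_norm_le_norm_mulVec {m : Type*} [Fintype m] [DecidableEq m]
    {P Q : Matrix m m ℝ} {ε : ℝ} (hPQ : ‖P - Q‖ ≤ ε) {y : m → ℝ} (hy : Q *ᵥ y = y) :
    (1 - ε) * ‖WithLp.toLp 2 y‖ ≤ ‖WithLp.toLp 2 (P *ᵥ y)‖ := by
  have hdiff : ‖WithLp.toLp 2 ((P - Q) *ᵥ y)‖ ≤ ε * ‖WithLp.toLp 2 y‖ :=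
    (l2_opNorm_mulVec (P - Q) (WithLp.toLp 2 y)).trans (by gcongr)
  have htri : ‖WithLp.toLp 2 y‖ ≤
      ‖WithLp.toLp 2 (P *ᵥ y)‖ + ‖WithLp.toLp 2 ((P - Q) *ᵥ y)‖ := by
    rw [sub_mulVec, hy, WithLp.toLp_sub]
    simpa using norm_sub_le (WithLp.toLp 2 (P *ᵥ y)) (WithLp.toLp 2 (P *ᵥ y) - WithLp.toLp 2 y)
  linarith

lemma Matrix.posSemidef_transpose_mul_mul_sub_of_norm_sub_le {m n : Type*} [Fintype m]
    [DecidableEq m] [Fintype n] {P Q : Matrix m m ℝ} {ε : ℝ} (hPsymm : Pᵀ = P)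
    (hPidem : IsIdempotentElem P) (hPQ : ‖P - Q‖ ≤ ε) (hε : ε ≤ 1) {F : Matrix m n ℝ}
    (hQF : Q * F = F) :
    (Fᵀ * P * F - (1 - ε) ^ 2 • (Fᵀ * F)).PosSemidef := by
  refine .of_dotProduct_mulVec_nonneg ?_ fun x => ?_
  · simp [IsHermitian, conjTranspose_eq_transpose_of_trivial, transpose_mul, hPsymm,
      Matrix.mul_assoc]
  set y := F *ᵥ x
  have hQy : Q *ᵥ y = y := by rw [mulVec_mulVec, hQF]
  have hquad (M : Matrix m m ℝ) : x ⬝ᵥ ((Fᵀ * M * F) *ᵥ x) = y ⬝ᵥ (M *ᵥ y) := by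
    rw [← mulVec_mulVec, ← mulVec_mulVec, dotProduct_mulVec, vecMul_transpose]
  have hgram : x ⬝ᵥ ((Fᵀ * F) *ᵥ x) = y ⬝ᵥ y := by simpa using hquad 1
  have hbound : ((1 - ε) * ‖WithLp.toLp 2 y‖) ^ 2 ≤ ‖WithLp.toLp 2 (P *ᵥ y)‖ ^ 2 :=
    pow_le_pow_left₀ (mul_nonneg (sub_nonneg.2 hε) (norm_nonneg _))
      (one_sub_mul_norm_le_norm_mulVec hPQ hQy) 2
  simp only [star_trivial, sub_mulVec, smul_mulVec, dotProduct_sub, dotProduct_smul, hquad,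
    hgram, dotProduct_mulVec_of_transpose_eq_of_isIdempotentElem hPsymm hPidem,
    dotProduct_self_eq_norm_sq, smul_eq_mul]
  rw [mul_pow] at hbound
  linarith

theorem stmt_18_general (p d : ℕ)
    (Fhat F : Matrix (Fin p) (Fin d) ℝ)
    (hFhat : (p : ℝ)⁻¹ • (Fhatᵀ * Fhat) = 1)
    (cF ε : ℝ) (hcF : 0 < cF) (hε1 : ε < 1)
    (hFmin : ((p : ℝ)⁻¹ • (Fᵀ * F) - cF • 1).PosSemidef)
    (PF PFhat : Matrix (Fin p) (Fin p) ℝ)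
    (hPF : PF = F * (Fᵀ * F)⁻¹ * Fᵀ)
    (hPFhat : PFhat = (p : ℝ)⁻¹ • (Fhat * Fhatᵀ))
    (hproj : ‖PFhat - PF‖ ≤ ε)
    (R : Matrix (Fin d) (Fin d) ℝ) (hR : R = (p : ℝ)⁻¹ • (Fᵀ * Fhat)) :
    R * Rᵀ = (p : ℝ)⁻¹ • (Fᵀ * PFhat * F)
    ∧ (R * Rᵀ - (cF * (1 - ε) ^ 2) • 1).PosSemidef
    ∧ IsUnit R.det := by
  have hRR : R * Rᵀ = (p : ℝ)⁻¹ • (Fᵀ * PFhat * F) := by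
    subst hR hPFhat
    simp only [transpose_smul, transpose_mul, transpose_transpose, Matrix.smul_mul, Matrix.mul_smul,
      smul_smul, Matrix.mul_assoc]
  have hgram : IsUnit (Fᵀ * F).det := by
    have hunit := (hFmin.posDef_of_sub_smul_one hcF).isUnit
    rw [isUnit_iff_isUnit_det, det_smul] at hunit
    exact isUnit_of_mul_isUnit_right hunit
  have hPFhat_symm : PFhatᵀ = PFhat := by simp [hPFhat, transpose_mul]
  have hLoewner := posSemidef_transpose_mul_mul_sub_of_norm_sub_le hPFhat_symm
    (hPFhat ▸ isIdempotentElem_smul_mul_transpose hFhat) hproj hε1.le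
    (hPF ▸ mul_nonsing_inv_transpose_mul_self_mul hgram)
  have hPSD : (R * Rᵀ - (cF * (1 - ε) ^ 2) • 1).PosSemidef := by
    have hsplit : R * Rᵀ - (cF * (1 - ε) ^ 2) • 1 =
        (p : ℝ)⁻¹ • (Fᵀ * PFhat * F - (1 - ε) ^ 2 • (Fᵀ * F)) +
          (1 - ε) ^ 2 • ((p : ℝ)⁻¹ • (Fᵀ * F) - cF • 1) := by
      rw [hRR]; module
    rw [hsplit]
    exact (hLoewner.smul (by positivity)).add (hFmin.smul (by positivity))
  refine ⟨hRR, hPSD, ?_⟩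
  have hunit :=
    (hPSD.posDef_of_sub_smul_one (mul_pos hcF (pow_pos (sub_pos.2 hε1) 2))).isUnit
  rw [isUnit_iff_isUnit_det, det_mul, det_transpose] at hunit
  exact isUnit_of_mul_isUnit_left hunit

/-- Conditioning of the PCA rotation matrix: if `(1/p)F̂'F̂ = I`, `s_min((1/p)F'F) ≥ c_F`,
and the projections onto the column spaces of `F̂` and `F` satisfy `‖P_F̂ − P_F‖ ≤ ε < 1`,
then `R = (1/p)F'F̂` satisfies `R·R' = (1/p)F'P_F̂F`, `s_min(R·R') ≥ c_F·(1−ε)²`, and in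
particular `R` is invertible. -/
theorem stmt_18 (p d : ℕ) (hp : 0 < p)
    (Fhat F : Matrix (Fin p) (Fin d) ℝ)
    (hFhat : (p : ℝ)⁻¹ • (Fhatᵀ * Fhat) = 1)
    (cF ε : ℝ) (hcF : 0 < cF) (hε0 : 0 ≤ ε) (hε1 : ε < 1)
    (hFmin : ((p : ℝ)⁻¹ • (Fᵀ * F) - cF • 1).PosSemidef)
    (PF PFhat : Matrix (Fin p) (Fin p) ℝ)
    (hPF : PF = F * (Fᵀ * F)⁻¹ * Fᵀ)
    (hPFhat : PFhat = (p : ℝ)⁻¹ • (Fhat * Fhatᵀ))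
    (hproj : ‖PFhat - PF‖ ≤ ε)
    (R : Matrix (Fin d) (Fin d) ℝ) (hR : R = (p : ℝ)⁻¹ • (Fᵀ * Fhat)) :
    R * Rᵀ = (p : ℝ)⁻¹ • (Fᵀ * PFhat * F)
    ∧ (R * Rᵀ - (cF * (1 - ε) ^ 2) • 1).PosSemidef
    ∧ IsUnit R.det :=
  stmt_18_general p d Fhat F hFhat cF ε hcF hε1 hFmin PF PFhat hPF hPFhat hproj R hR
end
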